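/- Let n ≥ 2 be an integer, x̄ ∈ ℝ, s > 0, α ∈ (0, 1), and let t > 0 satisfy F_{n-1}(t) - F_{n-1}(-t) = 1 - α. Set c₁(n) = (Γ(n/2)/Γ((n-1)/2)) √(2/(n-1)) and k = c₁(n)/(√n · f_{n-1}(t)). Define, for reals ℓ ≤ u, the posterior expected loss Λ(ℓ, u) = c₁(n)(u - ℓ)/s - k (F_{n-1}(√n(u - x̄)/s) - F_{n-1}(√n(ℓ - x̄)/s)). Then Λ attains its minimum over {(ℓ, u) : ℓ ≤ u} at ℓ* = x̄ - t s/√n and u* = x̄ + t s/√n: for all reals ℓ ≤ u, Λ(ℓ, u) ≥ Λ(ℓ*, u*). That is, the generalized Bayes rule under the loss length(C)/σ - k·1{μ ∈ C} and the noninformative prior 1/σ² is the usual 1 - α confidence interval [x̄ - t s/√n, x̄ + t s/√n] for the normal mean. -/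

import Mathlib

open MeasureTheory

/-- Student t pdf with `m` degrees of freedom. -/
noncomputable def tPdf (m : ℕ) (x : ℝ) : ℝ :=
  (Real.Gamma (((m : ℝ) + 1) / 2) / (Real.sqrt ((m : ℝ) * Real.pi) * Real.Gamma ((m : ℝ) / 2))) *
    (1 + x ^ 2 / (m : ℝ)) ^ (-(((m : ℝ) + 1) / 2))

/-- Student t cdf with `m` degrees of freedom. -/
noncomputable def tCdf (m : ℕ) (x : ℝ) : ℝ :=
  ∫ u in Set.Iic x, tPdf m u

/-!
After the substitution `x = √n (μ - x̄) / s`, and because `c₁ = k √n f(t)` with `f = f_{n-1}`,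
the loss is `Λ(ℓ, u) = k ∫_a^b (f(t) - f(x)) dx` over the standardized interval `[a, b]`.
Since `f` is decreasing in `|x|`, the integrand is `≤ 0` on `[-t, t]` and `≥ 0` off it,
so the integral is smallest for `[a, b] = [-t, t]`.
-/

theorem setIntegral_le_setIntegral_of_nonpos_of_nonneg_compl {α : Type*} [MeasurableSpace α]
    {μ : Measure α} {g : α → ℝ} {S T : Set α} (hS : MeasurableSet S) (hT : MeasurableSet T)
    (hgS : IntegrableOn g S μ) (hgT : IntegrableOn g T μ)
    (hnonpos : ∀ x ∈ T, g x ≤ 0) (hnonneg : ∀ x ∉ T, 0 ≤ g x) :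
    ∫ x in T, g x ∂μ ≤ ∫ x in S, g x ∂μ := by
  have hT_split := integral_inter_add_sdiff hS hgT
  have hS_split := integral_inter_add_sdiff hT hgS
  rw [Set.inter_comm] at hT_split
  have hT_diff : ∫ x in T \ S, g x ∂μ ≤ 0 :=
    setIntegral_nonpos (hT.diff hS) fun x hx => hnonpos x hx.1
  have hS_diff : 0 ≤ ∫ x in S \ T, g x ∂μ :=
    setIntegral_nonneg (hS.diff hT) fun x hx => hnonneg x hx.2
  linarith

section StudentT

variable {m : ℕ}

theorem tPdf_pos (hm : 0 < m) (x : ℝ) : 0 < tPdf m x := by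
  have hm' : (0 : ℝ) < m := by exact_mod_cast hm
  have hsqrt : 0 < Real.sqrt (m * Real.pi) := Real.sqrt_pos.2 (by positivity)
  unfold tPdf
  positivity

theorem tPdf_le_of_sq_le_sq {x y : ℝ} (h : x ^ 2 ≤ y ^ 2) : tPdf m y ≤ tPdf m x := by
  unfold tPdf
  gcongr ?_ * ?_
  exact Real.rpow_le_rpow_of_nonpos (by positivity) (by gcongr) (neg_nonpos.2 (by positivity))

theorem continuous_tPdf : Continuous (tPdf m) := by
  unfold tPdf
  exact continuous_const.mul <| (by fun_prop : Continuous fun x : ℝ => 1 + x ^ 2 / (m : ℝ)).rpow_const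
    fun x => Or.inl (by positivity)

theorem integrable_tPdf (hm : 0 < m) : Integrable (tPdf m) := by
  have hm' : (0 : ℝ) < m := by exact_mod_cast hm
  have hbracket : Integrable fun x : ℝ => ((1 : ℝ) + ‖x‖ ^ 2) ^ (-((m : ℝ) + 1) / 2) :=
    integrable_rpow_neg_one_add_norm_sq (by simp [hm'])
  refine ((hbracket.comp_div (Real.sqrt_pos.2 hm').ne').const_mul
    (Real.Gamma (((m : ℝ) + 1) / 2) / (Real.sqrt ((m : ℝ) * Real.pi) * Real.Gamma ((m : ℝ) / 2)))).congr
    (ae_of_all _ fun x => ?_)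
  simp only [tPdf, Real.norm_eq_abs, div_pow, sq_abs, Real.sq_sqrt hm'.le, neg_div]

theorem tCdf_sub_tCdf (hm : 0 < m) {a b : ℝ} (hab : a ≤ b) :
    tCdf m b - tCdf m a = ∫ x in Set.Ioc a b, tPdf m x := by
  have hint := integrable_tPdf hm
  rw [tCdf, tCdf, ← Set.Iic_union_Ioc_eq_Iic hab,
    setIntegral_union (Set.Iic_disjoint_Ioc le_rfl) measurableSet_Ioc
      hint.integrableOn hint.integrableOn]
  ring

noncomputable def tIntervalLoss (m : ℕ) (c a b : ℝ) : ℝ :=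
  c * (b - a) - (tCdf m b - tCdf m a)

theorem tIntervalLoss_eq_integral (hm : 0 < m) (c : ℝ) {a b : ℝ} (hab : a ≤ b) :
    tIntervalLoss m c a b = ∫ x in Set.Ioc a b, (c - tPdf m x) := by
  have hconst : IntegrableOn (fun _ => c) (Set.Ioc a b) :=
    integrableOn_const measure_Ioc_lt_top.ne
  rw [integral_sub hconst (integrable_tPdf hm).integrableOn,
    ← tCdf_sub_tCdf hm hab, setIntegral_const, measureReal_def, Real.volume_Ioc,
    ENNReal.toReal_ofReal (sub_nonneg.2 hab), smul_eq_mul, tIntervalLoss, mul_comm]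

theorem tIntervalLoss_neg_self_le (hm : 0 < m) {t : ℝ} (ht : 0 ≤ t) {a b : ℝ} (hab : a ≤ b) :
    tIntervalLoss m (tPdf m t) (-t) t ≤ tIntervalLoss m (tPdf m t) a b := by
  have hcont : Continuous fun x => tPdf m t - tPdf m x := continuous_const.sub continuous_tPdf
  rw [tIntervalLoss_eq_integral hm _ hab, tIntervalLoss_eq_integral hm _ (by linarith)]
  refine setIntegral_le_setIntegral_of_nonpos_of_nonneg_compl measurableSet_Ioc measurableSet_Ioc
    hcont.integrableOn_Ioc hcont.integrableOn_Ioc (fun x hx => ?_) (fun x hx => ?_)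
  · have : x ^ 2 ≤ t ^ 2 := sq_le_sq' hx.1.le hx.2
    linarith [tPdf_le_of_sq_le_sq (m := m) this]
  · have : t ^ 2 ≤ x ^ 2 := by
      rw [Set.mem_Ioc, not_and_or, not_lt, not_le] at hx
      rcases hx with hx | hx <;> nlinarith
    linarith [tPdf_le_of_sq_le_sq (m := m) this]

end StudentT

theorem stmt11_general (n : ℕ) (hn : 2 ≤ n) (xbar : ℝ) (s : ℝ) (hs : 0 < s)
    (t : ℝ) (ht : 0 < t)
    (c₁ k : ℝ)
    (hc₁ : c₁ = (Real.Gamma ((n : ℝ) / 2) / Real.Gamma (((n : ℝ) - 1) / 2)) *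
      Real.sqrt (2 / ((n : ℝ) - 1)))
    (hk : k = c₁ / (Real.sqrt n * tPdf (n - 1) t))
    (Λ : ℝ → ℝ → ℝ)
    (hΛ : ∀ l u : ℝ, Λ l u = c₁ * (u - l) / s -
      k * (tCdf (n - 1) (Real.sqrt n * (u - xbar) / s) -
           tCdf (n - 1) (Real.sqrt n * (l - xbar) / s)))
    (l u : ℝ) (hlu : l ≤ u) :
    Λ (xbar - t * s / Real.sqrt n) (xbar + t * s / Real.sqrt n) ≤ Λ l u := by
  have hm : 0 < n - 1 := by omega
  have hn' : (2 : ℝ) ≤ n := by exact_mod_cast hn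
  have hsqrt : 0 < Real.sqrt n := Real.sqrt_pos.2 (by linarith)
  have hft := tPdf_pos hm t
  have hc₁_nonneg : 0 ≤ c₁ := hc₁ ▸ mul_nonneg (div_nonneg (Real.Gamma_nonneg_of_nonneg
    (by positivity)) (Real.Gamma_nonneg_of_nonneg (by linarith))) (Real.sqrt_nonneg _)
  have hk_nonneg : 0 ≤ k := hk ▸ by positivity
  set std : ℝ → ℝ := fun y => Real.sqrt n * (y - xbar) / s
  have hΛ_std : ∀ l u, Λ l u = k * tIntervalLoss (n - 1) (tPdf (n - 1) t) (std l) (std u) := by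
    intro l u
    rw [hΛ, tIntervalLoss, hk]
    simp only [std]
    field_simp
    ring
  have hstd_lower : std (xbar - t * s / Real.sqrt n) = -t := by
    simp only [std]; field_simp; ring
  have hstd_upper : std (xbar + t * s / Real.sqrt n) = t := by
    simp only [std]; field_simp; ring
  rw [hΛ_std, hΛ_std, hstd_lower, hstd_upper]
  exact mul_le_mul_of_nonneg_left
    (tIntervalLoss_neg_self_le hm ht.le (by simp only [std]; gcongr)) hk_nonneg

/-- Let `n ≥ 2`, `x̄ ∈ ℝ`, `s > 0`, `α ∈ (0,1)`, `t > 0` with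
`F_{n-1}(t) - F_{n-1}(-t) = 1 - α`, `c₁(n) = (Γ(n/2)/Γ((n-1)/2))√(2/(n-1))` and
`k = c₁(n)/(√n f_{n-1}(t))`. The posterior expected loss
`Λ(ℓ, u) = c₁(n)(u - ℓ)/s - k (F_{n-1}(√n(u - x̄)/s) - F_{n-1}(√n(ℓ - x̄)/s))`
attains its minimum over `{ℓ ≤ u}` at `ℓ* = x̄ - t s/√n`, `u* = x̄ + t s/√n`:
the generalized Bayes rule is the usual `1 - α` confidence interval. -/
theorem stmt11 (n : ℕ) (hn : 2 ≤ n) (xbar : ℝ) (s : ℝ) (hs : 0 < s)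
    (α : ℝ) (hα0 : 0 < α) (hα1 : α < 1)
    (t : ℝ) (ht : 0 < t) (htα : tCdf (n - 1) t - tCdf (n - 1) (-t) = 1 - α)
    (c₁ k : ℝ)
    (hc₁ : c₁ = (Real.Gamma ((n : ℝ) / 2) / Real.Gamma (((n : ℝ) - 1) / 2)) *
      Real.sqrt (2 / ((n : ℝ) - 1)))
    (hk : k = c₁ / (Real.sqrt n * tPdf (n - 1) t))
    (Λ : ℝ → ℝ → ℝ)
    (hΛ : ∀ l u : ℝ, Λ l u = c₁ * (u - l) / s -
      k * (tCdf (n - 1) (Real.sqrt n * (u - xbar) / s) -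
           tCdf (n - 1) (Real.sqrt n * (l - xbar) / s)))
    (l u : ℝ) (hlu : l ≤ u) :
    Λ (xbar - t * s / Real.sqrt n) (xbar + t * s / Real.sqrt n) ≤ Λ l u :=
  stmt11_general n hn xbar s hs t ht c₁ k hc₁ hk Λ hΛ l u hlu
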